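/- arXiv:2210.15761 — 6 statements merged into one kernel-verified Lean document; each statement's English description precedes it below -/
import Mathlib

section
/- Let p ≥ 3 be a prime and let z be the least positive integer that is a quadratic non-residue modulo p. Then there exist positive integers a, b, c, d with 1 ≤ a, b, c, d ≤ ⌈√z⌉ + 1 such that ad - bc = z. -/
theorem stmt_0 (p : ℕ) (hp : p.Prime) (hp3 : 3 ≤ p) (z : ℕ)
    (hz : IsLeast {n : ℕ | 0 < n ∧ ¬ IsSquare ((n : ZMod p))} z) :
    ∃ a b c d : ℕ,
      1 ≤ a ∧ a ≤ ⌈Real.sqrt z⌉₊ + 1 ∧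
      1 ≤ b ∧ b ≤ ⌈Real.sqrt z⌉₊ + 1 ∧
      1 ≤ c ∧ c ≤ ⌈Real.sqrt z⌉₊ + 1 ∧
      1 ≤ d ∧ d ≤ ⌈Real.sqrt z⌉₊ + 1 ∧
      (a : ℤ) * d - (b : ℤ) * c = z := by
  obtain ⟨⟨hz0, hzns⟩, _⟩ := hz
  have hz2 : 2 ≤ z := by
    rcases Nat.lt_or_ge z 2 with h | h
    · interval_cases z
      · exact absurd (by simpa using isSquare_one) hzns
    · exact h
  set s := ⌈Real.sqrt z⌉₊ with hs
  have hsle : Real.sqrt z ≤ s := Nat.le_ceil _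
  have hzle : z ≤ s ^ 2 := by
    have h1 : (z : ℝ) ≤ (s : ℝ) ^ 2 := by
      nlinarith [Real.sq_sqrt (show (0:ℝ) ≤ (z:ℝ) by positivity),
        Real.sqrt_nonneg (z:ℝ)]
    exact_mod_cast h1
  have hs2 : 2 ≤ s := by
    by_contra h
    push_neg at h
    interval_cases s <;> omega
  have hlt : (s - 1) ^ 2 < z := by
    by_contra h
    push_neg at h
    have h1 : Real.sqrt z ≤ ((s - 1 : ℕ) : ℝ) := by
      calc Real.sqrt z ≤ Real.sqrt (((s - 1 : ℕ) : ℝ) ^ 2) := by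
            apply Real.sqrt_le_sqrt; exact_mod_cast h
        _ = ((s - 1 : ℕ) : ℝ) := Real.sqrt_sq (by positivity)
    have := Nat.ceil_le.mpr h1
    omega
  clear_value s
  obtain ⟨t, rfl⟩ : ∃ t, s = t + 2 := ⟨s - 2, by omega⟩
  have hzle' : z ≤ t * t + 4 * t + 4 := by nlinarith [hzle]
  have hlt' : t * t + 2 * t + 1 < z := by
    have e : t + 2 - 1 = t + 1 := rfl
    rw [e, show (t + 1) ^ 2 = t * t + 2 * t + 1 from by ring] at hlt
    exact hlt
  clear hlt hzle hsle hs
  obtain ⟨u, hu⟩ : ∃ u, u = t * t := ⟨_, rfl⟩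
  rw [← hu] at hzle' hlt'
  rcases hzle'.lt_or_eq with h1 | h1
  · rcases Nat.lt_or_ge (u + 3 * t + 1) z with h2 | h2
    · -- u + 3t + 2 < z < u + 4t + 4 :  z = (t+2)(t+2) - b, b = u+4t+4-z ∈ [1,t+1]
      refine ⟨t + 2, u + 4 * t + 4 - z, 1, t + 2, ?_, ?_, ?_, ?_, ?_, ?_, ?_, ?_, ?_⟩ <;>
        try omega

      rw [Nat.cast_sub (by omega)]
      push_cast
      rw [hu]
      push_cast
      ring
    · -- z ≤ u + 3t + 2 :  z = (t+2)(t+1) - b, b = u+3t+2-z ∈ [1,t+1]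
      refine ⟨t + 2, u + 3 * t + 2 - z, 1, t + 1, ?_, ?_, ?_, ?_, ?_, ?_, ?_, ?_, ?_⟩ <;>
        try omega
      rw [Nat.cast_sub (by omega)]
      push_cast
      rw [hu]
      push_cast
      ring
  · -- z = u + 4t + 4 = (t+2)^2 :  z = (t+3)(t+2) - (t+2)·1
    refine ⟨t + 3, t + 2, 1, t + 2, ?_, ?_, ?_, ?_, ?_, ?_, ?_, ?_, ?_⟩ <;>
      try omega
    have : (z : ℤ) = (t : ℤ) * t + 4 * t + 4 := by
      rw [h1, hu]; push_cast; ring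
    rw [this]
    push_cast
    ring
end

section
/- If 0 < κ₁ < 1 and C > 0 are such that for all primes p ≥ 3 the least quadratic non-residue z_p satisfies 2 ≤ z_p ≤ C·p^{κ₁}, then for all primes p ≥ 3 there exist integers a, b, c, d with 0 ≤ a, b, c, d ≤ √C·p^{κ₁/2} + 1 such that the matrix [[a,b],[c,d]] reduced modulo p is invertible over F_p and is not the square of any invertible 2×2 matrix over F_p. -/
theorem stmt_1 (κ₁ C : ℝ) (hκ : 0 < κ₁ ∧ κ₁ < 1) (hC : 0 < C)
    (h : ∀ p : ℕ, p.Prime → 3 ≤ p → ∀ z : ℕ,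
      IsLeast {n : ℕ | 0 < n ∧ ¬ IsSquare ((n : ZMod p))} z →
      2 ≤ z ∧ (z : ℝ) ≤ C * (p : ℝ) ^ κ₁) :
    ∀ p : ℕ, p.Prime → 3 ≤ p →
      ∃ a b c d : ℕ,
        (a : ℝ) ≤ Real.sqrt C * (p : ℝ) ^ (κ₁ / 2) + 1 ∧
        (b : ℝ) ≤ Real.sqrt C * (p : ℝ) ^ (κ₁ / 2) + 1 ∧
        (c : ℝ) ≤ Real.sqrt C * (p : ℝ) ^ (κ₁ / 2) + 1 ∧
        (d : ℝ) ≤ Real.sqrt C * (p : ℝ) ^ (κ₁ / 2) + 1 ∧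
        IsUnit (!![(a : ZMod p), b; c, d]) ∧
        ¬ ∃ B : Matrix (Fin 2) (Fin 2) (ZMod p), IsUnit B ∧ B * B = !![(a : ZMod p), b; c, d] := by
  intro p hp hp3
  haveI : Fact p.Prime := ⟨hp⟩
  have hchar : ringChar (ZMod p) ≠ 2 := by
    rw [ZMod.ringChar_zmod_n]; omega
  obtain ⟨x, hx⟩ := FiniteField.exists_nonsquare hchar
  set S : Set ℕ := {n : ℕ | 0 < n ∧ ¬ IsSquare ((n : ZMod p))} with hS
  have hne : S.Nonempty := by
    refine ⟨x.val, ?_, ?_⟩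
    · rw [ZMod.val_pos]
      rintro rfl
      exact hx ⟨0, by simp⟩
    · rwa [ZMod.natCast_val, ZMod.cast_id]
  have hleast : IsLeast S (sInf S) := ⟨Nat.sInf_mem hne, fun n hn => Nat.sInf_le hn⟩
  obtain ⟨z, hzl⟩ : ∃ z, IsLeast S z := ⟨sInf S, hleast⟩
  obtain ⟨hz2, hzC⟩ := h p hp hp3 z hzl
  obtain ⟨hzpos, hznsq⟩ := hzl.1
  obtain ⟨s, hs⟩ : ∃ s, Nat.sqrt z = s := ⟨_, rfl⟩
  -- bound : (s + 1 : ℝ) ≤ √C * p^(κ₁/2) + 1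
  have hbound : ((s + 1 : ℕ) : ℝ) ≤ Real.sqrt C * (p : ℝ) ^ (κ₁ / 2) + 1 := by
    push_cast
    have h1 : (s : ℝ) ≤ Real.sqrt z := by
      rw [show (s : ℝ) = Real.sqrt ((s : ℝ) ^ 2) by rw [Real.sqrt_sq (by positivity)]]
      apply Real.sqrt_le_sqrt
      have := Nat.sqrt_le' z
      rw [hs] at this
      exact_mod_cast this
    have h2 : Real.sqrt z ≤ Real.sqrt (C * (p : ℝ) ^ κ₁) := Real.sqrt_le_sqrt hzC
    have h3 : Real.sqrt (C * (p : ℝ) ^ κ₁) = Real.sqrt C * (p : ℝ) ^ (κ₁ / 2) := by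
      rw [Real.sqrt_mul hC.le, Real.sqrt_eq_rpow ((p : ℝ) ^ κ₁),
        ← Real.rpow_mul (by positivity), mul_one_div]
    linarith
  have hsz : s * s ≤ z := by
    have := Nat.sqrt_le' z
    rw [pow_two, hs] at this
    exact this
  have hzs : z < (s + 1) * (s + 1) := by
    have := Nat.lt_succ_sqrt' z
    rw [pow_two, hs] at this
    exact this
  obtain ⟨r, hr⟩ : ∃ r, (s + 1) * (s + 1) - z = r := ⟨_, rfl⟩
  have e1 : (s + 1) * (s + 1) = s * s + 2 * s + 1 := by ring
  have e2 : (s + 1) * s = s * s + s := by ring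
  have hzr : (s + 1) * (s + 1) = z + r := by omega
  have hrm : r ≤ 2 * s + 1 := by omega
  -- key helper
  have key : ∀ a b c d : ℕ, (a * d = z + b * c) →
      IsUnit (!![(a : ZMod p), b; c, d]) ∧
      ¬ ∃ B : Matrix (Fin 2) (Fin 2) (ZMod p), IsUnit B ∧ B * B = !![(a : ZMod p), b; c, d] := by
    intro a b c d habcd
    have hdet : (!![(a : ZMod p), b; c, d]).det = (z : ZMod p) := by
      rw [Matrix.det_fin_two_of]
      have : ((a * d : ℕ) : ZMod p) = ((z + b * c : ℕ) : ZMod p) := by rw [habcd]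
      push_cast at this
      linear_combination this
    constructor
    · rw [Matrix.isUnit_iff_isUnit_det, hdet, isUnit_iff_ne_zero]
      rintro h0
      exact hznsq (h0 ▸ ⟨0, by simp⟩)
    · rintro ⟨B, -, hB⟩
      exact hznsq ⟨B.det, by rw [← hdet, ← hB, Matrix.det_mul]⟩
  have cast_le : ∀ x : ℕ, x ≤ s + 1 → (x : ℝ) ≤ Real.sqrt C * (p : ℝ) ^ (κ₁ / 2) + 1 := by
    intro x hxs
    refine le_trans ?_ hbound
    exact_mod_cast hxs
  rcases le_or_gt r (s + 1) with hrle | hrgt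
  · -- matrix !![s+1, r; 1, s+1]
    exact ⟨s + 1, r, 1, s + 1, hbound, cast_le r hrle, cast_le 1 (by omega), hbound,
      key (s + 1) r 1 (s + 1) (by rw [mul_one]; omega)⟩
  · -- matrix !![s+1, r-(s+1); 1, s]
    exact ⟨s + 1, r - (s + 1), 1, s, hbound, cast_le _ (by omega), cast_le 1 (by omega),
      cast_le s (by omega), key (s + 1) (r - (s + 1)) 1 s (by rw [mul_one, e2]; omega)⟩
end

section
/- Let p be an odd prime and A a 2×2 matrix over F_p that is not a scalar multiple of the identity. Then A = B² for some 2×2 matrix B over F_p with Tr B ≠ 0 if and only if there exist s, t ∈ F_p with t ≠ 0, det A = s², and Tr A + 2s = t². -/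
lemma cay2 {K : Type*} [CommRing K] (M : Matrix (Fin 2) (Fin 2) K) :
    M * M = M.trace • M - M.det • (1 : Matrix (Fin 2) (Fin 2) K) := by
  ext i j
  fin_cases i <;> fin_cases j <;>
    simp [Matrix.mul_apply, Fin.sum_univ_two, Matrix.trace_fin_two,
      Matrix.det_fin_two, Matrix.one_apply, smul_eq_mul] <;> ring

theorem stmt_6 (p : ℕ) [Fact p.Prime] (hodd : Odd p)
    (A : Matrix (Fin 2) (Fin 2) (ZMod p))
    (hA : ∀ u : ZMod p, A ≠ u • (1 : Matrix (Fin 2) (Fin 2) (ZMod p))) :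
    (∃ B : Matrix (Fin 2) (Fin 2) (ZMod p), B * B = A ∧ B.trace ≠ 0) ↔
      ∃ s t : ZMod p, t ≠ 0 ∧ A.det = s ^ 2 ∧ A.trace + 2 * s = t ^ 2 := by
  constructor
  · rintro ⟨B, hB, ht⟩
    refine ⟨B.det, B.trace, ht, ?_, ?_⟩
    · rw [← hB, Matrix.det_mul]; ring
    · have h := cay2 B
      rw [← hB, h]
      simp only [Matrix.trace_sub, Matrix.trace_smul, Matrix.trace_one, smul_eq_mul]
      simp [Fintype.card_fin]
      ring
  · rintro ⟨s, t, ht, hdet, htr⟩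
    refine ⟨t⁻¹ • (A + s • 1), ?_, ?_⟩
    · have key : (A + s • 1) * (A + s • 1) = (t * t) • A := by
        have h := cay2 A
        have e : (A + s • (1 : Matrix (Fin 2) (Fin 2) (ZMod p))) * (A + s • 1)
            = A * A + (2 * s) • A + (s * s) • 1 := by
          simp only [mul_add, add_mul, smul_mul_assoc, mul_smul_comm,
            one_mul, mul_one, smul_smul]
          module
        have htr' : A.trace = t * t - 2 * s := by linear_combination htr
        rw [e, h, hdet, htr']
        module
      rw [Matrix.smul_mul, Matrix.mul_smul, key, smul_smul, smul_smul]
      rw [show (t⁻¹ * t⁻¹ * (t * t) : ZMod p) = (t⁻¹ * t) * (t⁻¹ * t) by ring,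
        inv_mul_cancel₀ ht, one_mul, one_smul]
    · simp only [Matrix.trace_smul, Matrix.trace_add, Matrix.trace_smul,
        Matrix.trace_one, smul_eq_mul]
      rw [show (A.trace + s * (Fintype.card (Fin 2) : ZMod p) : ZMod p)
          = A.trace + 2 * s by simp [Fintype.card_fin]; ring, htr]
      intro h
      apply ht
      have : t⁻¹ * t ^ 2 = t := by field_simp
      rw [this] at h
      exact h
end

section
/- The number of 2×2 matrices A over F_p (p an odd prime) such that A = B² for some 2×2 matrix B over F_p is (3/8)p⁴ + O(p³). -/
/-!
Work over a field with `q` elements, `q` odd. If `B` has eigenvalues `μ, ν`, put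
`x = (μ + ν)² = tr(B)²` and `y = (μ - ν)² = tr(B)² - 4 det B`; then `A = B²` has `(tr A, det A) = ((x + y) / 2, ((x - y) / 4)²)` and discriminant
`tr(A)² - 4 det A = x y`. Conversely, if `(tr A, det A)` arises in this way from a pair with
`x = t²` a nonzero square, then `t⁻¹ (A + (x - y) / 4)` is a square root of `A`
(Cayley–Hamilton). So, away from the `O(q)` trace–determinant pairs with vanishing determinant
or discriminant, `A` is a square exactly when `(tr A, det A)` is the image of a pair of distinct
nonzero `x, y` that are not both nonsquares. With `n = (q - 1) / 2` nonsquares there are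
`3n² - n` such pairs, and they map two-to-one (`x ↔ y`), giving `(3n² - n) / 2 ≈ 3q² / 8`
trace–determinant pairs. Every fibre of `A ↦ (tr A, det A)` has `q² + O(q)` elements, which
gives `3q⁴ / 8 + O(q³)` squares.
-/

open Finset Matrix

section Field

variable {K : Type*} [Field K]

def sqTraceDet (x y : K) : K × K := ((x + y) / 2, ((x - y) / 4) ^ 2)

theorem sqTraceDet_comm (x y : K) : sqTraceDet x y = sqTraceDet y x := by
  rw [sqTraceDet, sqTraceDet, add_comm, ← neg_sub, neg_div, neg_sq]

variable [NeZero (2 : K)]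

instance : NeZero (4 : K) := ⟨by simpa [show (4 : K) = 2 ^ 2 by norm_num] using NeZero.ne (2 : K)⟩

theorem trace_det_mul_self (B : Matrix (Fin 2) (Fin 2) K) :
    ((B * B).trace, (B * B).det) = sqTraceDet (B.trace ^ 2) (B.trace ^ 2 - 4 * B.det) := by
  simp only [sqTraceDet, det_mul, trace_fin_two, det_fin_two, mul_apply, Fin.sum_univ_two,
    Prod.mk.injEq]
  constructor <;> field_simp <;> ring

theorem sqTraceDet_fst_sq_sub (x y : K) :
    (sqTraceDet x y).1 ^ 2 - 4 * (sqTraceDet x y).2 = x * y := by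
  simp only [sqTraceDet]
  field_simp
  ring

theorem eq_or_eq_swap_of_sqTraceDet_eq {x y x' y' : K} (h : sqTraceDet x' y' = sqTraceDet x y) :
    (x', y') = (x, y) ∨ (x', y') = (y, x) := by
  simp only [sqTraceDet, Prod.mk.injEq] at h ⊢
  obtain ⟨hsum, hdiff⟩ := h
  rw [div_left_inj' (NeZero.ne 2)] at hsum
  rcases sq_eq_sq_iff_eq_or_eq_neg.mp hdiff with h | h <;> field_simp at h
  · have hx : x' = x := mul_left_cancel₀ two_ne_zero (by linear_combination hsum + h)
    exact .inl ⟨hx, by linear_combination hsum - hx⟩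
  · have hx : x' = y := mul_left_cancel₀ two_ne_zero (by linear_combination hsum + h)
    exact .inr ⟨hx, by linear_combination hsum - hx⟩

theorem exists_mul_self_eq_of_trace_det_eq {A : Matrix (Fin 2) (Fin 2) K} {x y : K}
    (hA : (A.trace, A.det) = sqTraceDet x y) (hx : IsSquare x) (hx0 : x ≠ 0) :
    ∃ B, B * B = A := by
  obtain ⟨t, rfl⟩ := hx
  have ht : t ≠ 0 := by rintro rfl; simp at hx0
  refine ⟨t⁻¹ • (A + ((t * t - y) / 4) • 1), ?_⟩
  simp only [sqTraceDet, trace_fin_two, det_fin_two, Prod.mk.injEq] at hA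
  obtain ⟨hT, hD⟩ := hA
  field_simp at hT hD
  ext i j
  fin_cases i <;> fin_cases j <;>
    simp [mul_apply, Fin.sum_univ_two] <;> field_simp
  · linear_combination 8 * A 0 0 * hT - hD
  · linear_combination 2 * A 0 1 * hT
  · linear_combination 2 * A 1 0 * hT
  · linear_combination 8 * A 1 1 * hT - hD

end Field

section FiniteField

variable {K : Type*} [Field K] [Fintype K] [DecidableEq K]

theorem two_mul_card_filter_not_isSquare_add_one (hK : ringChar K ≠ 2) :
    2 * #{a : K | ¬IsSquare a} + 1 = Fintype.card K := by
  have pointwise (a : K) : 1 - quadraticChar K a =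
      (if a = 0 then 1 else 0) + 2 * (if ¬IsSquare a then 1 else 0) := by
    by_cases ha : a = 0
    · simp [ha]
    by_cases hsq : IsSquare a
    · simp [ha, hsq, (quadraticChar_one_iff_isSquare ha).mpr hsq]
    · simp [ha, hsq, quadraticChar_neg_one_iff_not_isSquare.mpr hsq]
  have hsum := sum_congr rfl fun a (_ : a ∈ univ) => pointwise a
  rw [sum_sub_distrib, quadraticChar_sum_zero hK, sum_add_distrib, ← mul_sum,
    sum_ite_eq' univ (0 : K), sum_boole] at hsum
  simp only [sum_const, card_univ, nsmul_eq_mul, mul_one, sub_zero, if_pos (mem_univ _)] at hsum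
  rw [add_comm]
  exact_mod_cast hsum.symm

theorem card_filter_mul_left_eq (b k : K) :
    #{c : K | b * c = k} = if b = 0 then (if k = 0 then Fintype.card K else 0) else 1 := by
  split_ifs with hb hk
  · simp [hb, hk]
  · simp [hb, Ne.symm hk]
  · exact card_eq_one.mpr ⟨b⁻¹ * k, by ext c; simp [eq_inv_mul_iff_mul_eq₀ hb]⟩

theorem card_filter_mul_eq (k : K) :
    #{bc : K × K | bc.1 * bc.2 = k} =
      Fintype.card K - 1 + if k = 0 then Fintype.card K else 0 := by
  rw [card_filter, Fintype.sum_prod_type, Fintype.sum_eq_add_sum_compl 0]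
  simp only [← card_filter, card_filter_mul_left_eq]
  rw [if_pos trivial, sum_congr rfl fun b hb => if_neg (by simpa using hb)]
  simp [add_comm, card_compl]

theorem card_filter_trace_det_eq_sum (T D : K) :
    #{A : Matrix (Fin 2) (Fin 2) K | A.trace = T ∧ A.det = D} =
      ∑ a : K, #{bc : K × K | bc.1 * bc.2 = a * (T - a) - D} := by
  rw [card_eq_sum_card_fiberwise (f := fun A => A 0 0) (t := univ)
    fun _ _ => mem_coe.2 (mem_univ _)]
  refine sum_congr rfl fun a _ => card_nbij' (fun A => (A 0 1, A 1 0))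
    (fun bc => !![a, bc.1; bc.2, T - a]) ?_ ?_ ?_ ?_
  · intro A hA
    simp only [mem_coe, mem_filter, mem_univ, true_and, trace_fin_two, det_fin_two] at hA ⊢
    obtain ⟨⟨hT, hD⟩, rfl⟩ := hA
    linear_combination A 0 0 * hT - hD
  · intro bc hbc
    simp only [mem_coe, mem_filter, mem_univ, true_and, trace_fin_two_of, det_fin_two_of] at hbc ⊢
    exact ⟨⟨by ring, by linear_combination -hbc⟩, rfl⟩
  · intro A hA
    simp only [mem_coe, mem_filter, mem_univ, true_and, trace_fin_two] at hA
    obtain ⟨⟨hT, -⟩, rfl⟩ := hA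
    ext i j
    fin_cases i <;> fin_cases j <;> simp [← hT]
  · intro bc _
    simp

theorem card_filter_mul_sub_eq_le_two (T D : K) : #{a : K | a * (T - a) = D} ≤ 2 := by
  obtain h | ⟨a₀, ha₀⟩ := (filter (fun a : K => a * (T - a) = D) univ).eq_empty_or_nonempty
  · simp [h]
  refine (card_le_card (t := {a₀, T - a₀}) fun a ha => ?_).trans card_le_two
  simp only [mem_filter, mem_univ, true_and, mem_insert, mem_singleton] at ha ha₀ ⊢
  have : (a - a₀) * (T - a - a₀) = 0 := by linear_combination ha - ha₀
  rcases mul_eq_zero.mp this with h | h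
  · exact Or.inl (by linear_combination h)
  · exact Or.inr (by linear_combination -h)

theorem card_filter_trace_det_eq (T D : K) :
    #{A : Matrix (Fin 2) (Fin 2) K | A.trace = T ∧ A.det = D} =
      Fintype.card K * (Fintype.card K - 1) +
        Fintype.card K * #{a : K | a * (T - a) = D} := by
  simp only [card_filter_trace_det_eq_sum, card_filter_mul_eq, sum_add_distrib, sum_const,
    card_univ, smul_eq_mul, sum_ite, sub_eq_zero]
  ring

theorem card_filter_trace_det_eq_le (g : K × K) :
    #{A : Matrix (Fin 2) (Fin 2) K | (A.trace, A.det) = g} ≤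
      Fintype.card K * (Fintype.card K + 1) := by
  obtain ⟨T, D⟩ := g
  simp only [Prod.mk.injEq, card_filter_trace_det_eq]
  have := Fintype.card_pos (α := K)
  calc _ ≤ Fintype.card K * (Fintype.card K - 1) + Fintype.card K * 2 := by
        gcongr; exact card_filter_mul_sub_eq_le_two T D
    _ = _ := by rw [← mul_add]; congr 1; omega

theorem le_card_filter_trace_det_eq (g : K × K) :
    Fintype.card K * (Fintype.card K - 1) ≤
      #{A : Matrix (Fin 2) (Fin 2) K | (A.trace, A.det) = g} := by
  obtain ⟨T, D⟩ := g
  simp only [Prod.mk.injEq, card_filter_trace_det_eq]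
  exact Nat.le_add_right _ _

theorem card_filter_trace_det_mem_le (t : Finset (K × K)) :
    #{A : Matrix (Fin 2) (Fin 2) K | (A.trace, A.det) ∈ t} ≤
      #t * (Fintype.card K * (Fintype.card K + 1)) := by
  rw [← sum_card_fiberwise_eq_card_filter, ← smul_eq_mul, ← sum_const]
  exact sum_le_sum fun g _ => card_filter_trace_det_eq_le g

theorem le_card_filter_trace_det_mem (t : Finset (K × K)) :
    #t * (Fintype.card K * (Fintype.card K - 1)) ≤
      #{A : Matrix (Fin 2) (Fin 2) K | (A.trace, A.det) ∈ t} := by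
  rw [← sum_card_fiberwise_eq_card_filter, ← smul_eq_mul, ← sum_const]
  exact sum_le_sum fun g _ => le_card_filter_trace_det_eq g

variable (K) in
def squareParams : Finset (K × K) :=
  (univ.filter (· ≠ 0)).offDiag \ (univ.filter (¬IsSquare ·)).offDiag

variable (K) in
def squareTraceDets : Finset (K × K) :=
  (squareParams K).image fun z => sqTraceDet z.1 z.2

variable (K) in
def degenerateTraceDets : Finset (K × K) :=
  univ ×ˢ {0} ∪ univ.image fun T => (T, T ^ 2 / 4)

theorem mem_squareParams {z : K × K} :
    z ∈ squareParams K ↔ z.1 ≠ 0 ∧ z.2 ≠ 0 ∧ z.1 ≠ z.2 ∧ (IsSquare z.1 ∨ IsSquare z.2) := by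
  simp only [squareParams, mem_sdiff, mem_offDiag, mem_filter, mem_univ, true_and]
  tauto

theorem card_squareParams_add (hK : ringChar K ≠ 2) :
    #(squareParams K) + #{a : K | ¬IsSquare a} = 3 * #{a : K | ¬IsSquare a} ^ 2 := by
  have hq := two_mul_card_filter_not_isSquare_add_one hK
  have hN : #{a : K | a ≠ 0} = 2 * #{a : K | ¬IsSquare a} := by
    rw [filter_ne', card_erase_of_mem (mem_univ _), card_univ]
    omega
  have hsub : (univ.filter (¬IsSquare · : K → Prop)).offDiag ⊆ (univ.filter (· ≠ 0)).offDiag :=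
    offDiag_mono fun a => by simpa using fun ha h0 => ha (h0 ▸ IsSquare.zero)
  have := card_sdiff_add_card_eq_card hsub
  rw [offDiag_card, offDiag_card, hN] at this
  zify [Nat.le_mul_self] at this ⊢
  rw [squareParams]
  linear_combination this

theorem card_degenerateTraceDets_le : #(degenerateTraceDets K) ≤ 2 * Fintype.card K := by
  calc _ ≤ #(univ ×ˢ {(0 : K)}) + #(univ.image fun T : K => (T, T ^ 2 / 4)) := card_union_le _ _
    _ ≤ Fintype.card K + Fintype.card K := add_le_add (by simp) card_image_le
    _ = 2 * Fintype.card K := (two_mul _).symm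

section NeZeroTwo

variable [NeZero (2 : K)]

theorem card_squareParams_eq_two_mul :
    #(squareParams K) = 2 * #(squareTraceDets K) := by
  rw [card_eq_sum_card_image (fun z : K × K => sqTraceDet z.1 z.2), ← squareTraceDets, mul_comm,
    ← smul_eq_mul, ← sum_const]
  refine sum_congr rfl fun g hg => ?_
  obtain ⟨⟨x, y⟩, hxy, rfl⟩ := mem_image.mp hg
  have hne : x ≠ y := (mem_squareParams.mp hxy).2.2.1
  have hswap : (x, y) ≠ (y, x) := fun h => hne (Prod.ext_iff.mp h).1
  convert card_pair hswap
  ext ⟨x', y'⟩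
  simp only [mem_filter, mem_insert, mem_singleton]
  constructor
  · exact fun h => eq_or_eq_swap_of_sqTraceDet_eq h.2
  · rintro (h | h) <;> cases h
    · exact ⟨hxy, rfl⟩
    · refine ⟨?_, sqTraceDet_comm _ _⟩
      rw [mem_squareParams] at hxy ⊢
      tauto

theorem mul_ne_zero_and_ne_of_sqTraceDet_notMem {x y : K}
    (h : sqTraceDet x y ∉ degenerateTraceDets K) : x * y ≠ 0 ∧ x ≠ y := by
  simp only [degenerateTraceDets, mem_union, mem_product, mem_univ, true_and, mem_singleton,
    mem_image, not_or, not_exists] at h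
  obtain ⟨hD, hT⟩ := h
  refine ⟨fun h0 => hT (sqTraceDet x y).1 ?_, fun hxy => hD ?_⟩
  · rw [← sqTraceDet_fst_sq_sub] at h0
    ext
    · rfl
    · rw [div_eq_iff (NeZero.ne 4)]
      linear_combination h0
  · simp [sqTraceDet, hxy]

theorem exists_mul_self_eq_of_mem_squareTraceDets {A : Matrix (Fin 2) (Fin 2) K}
    (hA : (A.trace, A.det) ∈ squareTraceDets K) : ∃ B, B * B = A := by
  obtain ⟨⟨x, y⟩, hxy, hA⟩ := mem_image.mp hA
  obtain ⟨hx0, hy0, -, hx | hy⟩ := mem_squareParams.mp hxy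
  · exact exists_mul_self_eq_of_trace_det_eq hA.symm hx hx0
  · exact exists_mul_self_eq_of_trace_det_eq (hA.symm.trans (sqTraceDet_comm x y)) hy hy0

theorem trace_det_mul_self_mem (B : Matrix (Fin 2) (Fin 2) K) :
    ((B * B).trace, (B * B).det) ∈ squareTraceDets K ∪ degenerateTraceDets K := by
  rw [trace_det_mul_self, mem_union, or_iff_not_imp_right]
  intro hdeg
  obtain ⟨hxy0, hxy⟩ := mul_ne_zero_and_ne_of_sqTraceDet_notMem hdeg
  have hmem : (B.trace ^ 2, B.trace ^ 2 - 4 * B.det) ∈ squareParams K := mem_squareParams.mpr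
    ⟨left_ne_zero_of_mul hxy0, right_ne_zero_of_mul hxy0, hxy, .inl (.sq B.trace)⟩
  exact mem_image_of_mem _ hmem

theorem card_filter_exists_mul_self_eq_le :
    #{A : Matrix (Fin 2) (Fin 2) K | ∃ B, B * B = A} ≤
      (#(squareTraceDets K) + 2 * Fintype.card K) * (Fintype.card K * (Fintype.card K + 1)) :=
  calc _ ≤ #{A : Matrix (Fin 2) (Fin 2) K |
          (A.trace, A.det) ∈ squareTraceDets K ∪ degenerateTraceDets K} :=
        card_le_card <| monotone_filter_right _ fun A _ ⟨B, hB⟩ => hB ▸ trace_det_mul_self_mem B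
    _ ≤ #(squareTraceDets K ∪ degenerateTraceDets K) * (Fintype.card K * (Fintype.card K + 1)) :=
        card_filter_trace_det_mem_le _
    _ ≤ _ := by
        gcongr
        exact (card_union_le _ _).trans (Nat.add_le_add_left card_degenerateTraceDets_le _)

theorem le_card_filter_exists_mul_self_eq :
    #(squareTraceDets K) * (Fintype.card K * (Fintype.card K - 1)) ≤
      #{A : Matrix (Fin 2) (Fin 2) K | ∃ B, B * B = A} :=
  (le_card_filter_trace_det_mem _).trans <| card_le_card <|
    monotone_filter_right _ fun _ _ => exists_mul_self_eq_of_mem_squareTraceDets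

end NeZeroTwo

theorem abs_card_filter_exists_mul_self_eq_sub_le (hK : ringChar K ≠ 2) :
    |(#{A : Matrix (Fin 2) (Fin 2) K | ∃ B, B * B = A} : ℝ) - 3 / 8 * (Fintype.card K : ℝ) ^ 4| ≤
      4 * (Fintype.card K : ℝ) ^ 3 := by
  have : NeZero (2 : K) := ⟨Ring.two_ne_zero hK⟩
  set n := #{a : K | ¬IsSquare a}
  have hq : (Fintype.card K : ℝ) = 2 * n + 1 := by
    exact_mod_cast (two_mul_card_filter_not_isSquare_add_one hK).symm
  have hG : (#(squareTraceDets K) : ℝ) = (3 * n ^ 2 - n) / 2 := by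
    have h := card_squareParams_add hK
    rw [card_squareParams_eq_two_mul] at h
    have h' : (2 * #(squareTraceDets K) + n : ℝ) = 3 * n ^ 2 := by exact_mod_cast h
    linear_combination h' / 2
  have hlo := le_card_filter_exists_mul_self_eq (K := K)
  rw [← Nat.cast_le (α := ℝ)] at hlo
  push_cast [Nat.cast_sub Fintype.card_pos] at hlo
  have hup : (#{A : Matrix (Fin 2) (Fin 2) K | ∃ B, B * B = A} : ℝ) ≤
      (#(squareTraceDets K) + 2 * Fintype.card K) * (Fintype.card K * (Fintype.card K + 1)) := by
    exact_mod_cast card_filter_exists_mul_self_eq_le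
  rw [hq, hG] at hlo hup
  rw [hq]
  have hn : (0 : ℝ) ≤ n := n.cast_nonneg
  rw [abs_le]
  constructor <;> nlinarith [pow_nonneg hn 2, pow_nonneg hn 3]

end FiniteField

theorem stmt_7 :
    ∃ C : ℝ, ∀ p : ℕ, p.Prime → Odd p →
      |(({A : Matrix (Fin 2) (Fin 2) (ZMod p) |
            ∃ B : Matrix (Fin 2) (Fin 2) (ZMod p), B * B = A}.ncard : ℝ)
          - (3 / 8) * (p : ℝ) ^ 4)| ≤ C * (p : ℝ) ^ 3 := by
  refine ⟨4, fun p hp hodd => ?_⟩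
  have : Fact p.Prime := ⟨hp⟩
  have hK : ringChar (ZMod p) ≠ 2 := by
    rw [ZMod.ringChar_zmod_n]
    rintro rfl
    exact Nat.not_odd_iff_even.mpr even_two hodd
  have h := abs_card_filter_exists_mul_self_eq_sub_le hK
  rw [ZMod.card] at h
  rwa [Set.ncard_eq_toFinset_card', Set.toFinset_ofPred]
end

section
/- The number of matrices A ∈ GL(2, F_p) (p an odd prime) that are not the square of any matrix in GL(2, F_p) equals (5/8)p⁴ + O(p³). -/
/-!
For a non-scalar invertible `2 × 2` matrix `A`, Cayley–Hamilton shows that `A = B²` exactly when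
some `e` with `e² = det A` makes `trace A + 2e = s²` a nonzero square (then `B = (A + e) / s`).
Up to the `O(p)` scalar matrices, being a non-square therefore depends only on `(trace A, det A)`.
Every fibre of `A ↦ (trace A, det A)` has `p² + O(p)` elements, and the pairs `(t, d)`, `d ≠ 0`,
of non-squares number `5p²/8 + O(p)`: all `t` for each of the `(p - 1)/2` non-square `d`, and,
by a quadratic character sum, about a quarter of the `t` for each `d = y²`, namely those for
which neither `t + 2y` nor `t - 2y` is a nonzero square.
-/

open Finset Matrix

theorem Matrix.mul_self_fin_two {R : Type*} [CommRing R] (B : Matrix (Fin 2) (Fin 2) R) :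
    B * B = B.trace • B - B.det • 1 := by
  ext i j
  fin_cases i <;> fin_cases j <;> simp [Matrix.mul_apply, trace_fin_two, det_fin_two] <;> ring

theorem Finset.abs_card_sub_card_le {α : Type*} [DecidableEq α] {s t u : Finset α}
    (h : ∀ x ∉ u, x ∈ s ↔ x ∈ t) : |(#s : ℤ) - #t| ≤ #u := by
  have key : ∀ {s t : Finset α}, (∀ x ∉ u, x ∈ s ↔ x ∈ t) → #s ≤ #u + #t := fun {s t} h =>
    calc #s ≤ #(s \ t) + #t := card_le_card_sdiff_add_card
      _ ≤ #u + #t := by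
        gcongr
        intro x hx
        rw [mem_sdiff] at hx
        by_contra hxu
        exact hx.2 ((h x hxu).mp hx.1)
  have h₁ := key h
  have h₂ := key fun x hx => (h x hx).symm
  rw [abs_le]
  constructor <;> omega

section SquareCriterion

variable {K : Type*} [Field K]

/-- `(t, d)` is `(trace (B * B), det (B * B))` for some `B` with `det B = e`, `trace B = s ≠ 0`. -/
def IsSquareTraceDet (t d : K) : Prop :=
  ∃ e s : K, e * e = d ∧ s ≠ 0 ∧ s * s = t + 2 * e

theorem isSquare_iff_isSquareTraceDet {A : Matrix (Fin 2) (Fin 2) K} (hA : IsUnit A)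
    (hA_scalar : ∀ c : K, A ≠ c • 1) :
    (∃ B, IsUnit B ∧ B * B = A) ↔ IsSquareTraceDet A.trace A.det := by
  constructor
  · rintro ⟨B, -, rfl⟩
    refine ⟨B.det, B.trace, (B.det_mul B).symm, fun h0 => hA_scalar (-B.det) ?_, ?_⟩
    · rw [B.mul_self_fin_two, h0, zero_smul, zero_sub, neg_smul]
    · rw [B.mul_self_fin_two, trace_sub, trace_smul, trace_smul, trace_one]
      simp only [smul_eq_mul, Fintype.card_fin]
      ring
  · rintro ⟨e, s, he, hs, hse⟩
    have key : (A + e • 1) * (A + e • 1) = (s * s) • A :=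
      calc (A + e • 1) * (A + e • 1) = A * A + (2 * e) • A + (e * e) • 1 := by
            simp only [add_mul, mul_add, mul_one, one_mul, smul_mul_assoc, mul_smul_comm,
              smul_add, smul_smul, two_mul, add_smul]
            abel
        _ = (s * s) • A := by rw [A.mul_self_fin_two, he, hse, add_smul]; abel
    have hsq : (s⁻¹ • (A + e • 1)) * (s⁻¹ • (A + e • 1)) = A := by
      rw [smul_mul_smul_comm, key, smul_smul, mul_mul_mul_comm, inv_mul_cancel₀ hs, one_mul,
        one_smul]
    exact ⟨_, isUnit_of_mul_isUnit_left (hsq ▸ hA), hsq⟩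

end SquareCriterion

section FiniteField

variable {F : Type*} [Field F] [Fintype F] [DecidableEq F]

local notation "q" => (Fintype.card F : ℤ)
local notation "χ" => quadraticChar F

theorem card_filter_mul_sub_eq_le_two_s8 (t d : F) : #{a | a * (t - a) = d} ≤ 2 := by
  obtain h | ⟨a₀, ha₀⟩ := (univ.filter fun a : F => a * (t - a) = d).eq_empty_or_nonempty
  · simp [h]
  · calc _ ≤ #{a₀, t - a₀} := card_le_card fun a ha => by
          simp only [mem_filter, mem_univ, true_and, mem_insert, mem_singleton] at ha ha₀ ⊢
          have : (a - a₀) * (a - (t - a₀)) = 0 := by linear_combination ha₀ - ha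
          simpa [sub_eq_zero] using this
      _ ≤ 2 := card_le_two

theorem card_filter_mul_eq_s8 (b m : F) :
    #{c | b * c = m} = if b = 0 then (if m = 0 then Fintype.card F else 0) else 1 := by
  split_ifs with hb hm
  · simp [hb, hm]
  · simp [hb, Ne.symm hm]
  · rw [card_eq_one]
    exact ⟨b⁻¹ * m, by ext c; simp [eq_inv_mul_iff_mul_eq₀ hb]⟩

theorem card_filter_fst_mul_snd_eq (m : F) :
    #{x : F × F | x.1 * x.2 = m} = Fintype.card F - 1 + if m = 0 then Fintype.card F else 0 := by
  rw [card_filter, Fintype.sum_prod_type]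
  simp only [← card_filter, card_filter_mul_eq_s8]
  rw [Fintype.sum_eq_add_sum_compl 0, if_pos rfl,
    sum_congr rfl fun b hb => if_neg (by simpa using hb), sum_const, card_compl, card_singleton,
    smul_eq_mul, mul_one, add_comm]

theorem card_trace_det_eq (t d : F) :
    #{A : Matrix (Fin 2) (Fin 2) F | A.trace = t ∧ A.det = d} =
      Fintype.card F * (Fintype.card F - 1) + Fintype.card F * #{a | a * (t - a) = d} := by
  have hparam : #{A : Matrix (Fin 2) (Fin 2) F | A.trace = t ∧ A.det = d} =
      #{x : F × F × F | x.2.1 * x.2.2 = x.1 * (t - x.1) - d} := by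
    refine card_nbij' (fun A => (A 0 0, A 0 1, A 1 0)) (fun x => !![x.1, x.2.1; x.2.2, t - x.1])
      (fun A hA => ?_) (fun x hx => ?_) (fun A hA => ?_) (fun x _ => by simp)
    · simp only [coe_filter, Set.mem_ofPred_eq, mem_univ, true_and, trace_fin_two,
        det_fin_two] at hA ⊢
      linear_combination A 0 0 * hA.1 - hA.2
    · simp only [coe_filter, Set.mem_ofPred_eq, mem_univ, true_and, trace_fin_two_of,
        det_fin_two_of] at hx ⊢
      exact ⟨by ring, by linear_combination -hx⟩
    · simp only [coe_filter, Set.mem_ofPred_eq, mem_univ, true_and, trace_fin_two] at hA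
      ext i j
      fin_cases i <;> fin_cases j <;> simp
      linear_combination -hA.1
  rw [hparam, card_filter, Fintype.sum_prod_type]
  simp only [← card_filter, card_filter_fst_mul_snd_eq, sub_eq_zero]
  rw [sum_add_distrib, sum_const, card_univ, smul_eq_mul, ← sum_filter, sum_const, smul_eq_mul]
  ring

theorem abs_card_trace_det_sub_le (t d : F) :
    |(#{A : Matrix (Fin 2) (Fin 2) F | A.trace = t ∧ A.det = d} : ℤ) - Fintype.card F ^ 2| ≤
      Fintype.card F := by
  have hq : 1 ≤ Fintype.card F := Fintype.card_pos
  have hroots := card_filter_mul_sub_eq_le_two_s8 t d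
  rw [card_trace_det_eq, abs_le]
  push_cast [Nat.cast_sub hq]
  constructor <;> nlinarith

theorem quadraticChar_eq_one_iff_exists_mul_self {u : F} :
    χ u = 1 ↔ ∃ s, s ≠ 0 ∧ s * s = u := by
  rcases eq_or_ne u 0 with rfl | hu
  · simp
  · rw [quadraticChar_one_iff_isSquare hu]
    exact ⟨fun ⟨s, hs⟩ => ⟨s, by rintro rfl; simp_all, hs.symm⟩, fun ⟨s, _, hs⟩ => ⟨s, hs.symm⟩⟩

theorem quadraticChar_sum_mul_add (hF : ringChar F ≠ 2) {a b : F} (hab : a ≠ b) :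
    ∑ t, χ (t + a) * χ (t + b) = -1 := by
  have hJ := jacobiSum_nontrivial_inv (quadraticChar_ne_one hF)
  rw [(quadraticChar_isQuadratic F).inv, jacobiSum] at hJ
  have hba : b - a ≠ 0 := sub_ne_zero.mpr hab.symm
  let e : F ≃ F := (Equiv.mulLeft₀ (b - a) hba).trans (Equiv.subRight b)
  calc ∑ t, χ (t + a) * χ (t + b) = ∑ x, χ (e x + a) * χ (e x + b) := (e.sum_comp _).symm
    _ = ∑ x, χ (-1) * (χ x * χ (1 - x)) := sum_congr rfl fun x _ => by
      have h : e x + a = -1 * (b - a) * (1 - x) := by simp [e]; ring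
      have h' : e x + b = (b - a) * x := by simp [e]
      rw [h, h', map_mul, map_mul, map_mul]
      linear_combination (χ (-1) * χ x * χ (1 - x)) * quadraticChar_sq_one hba
    _ = -1 := by
      rw [← mul_sum, hJ]
      linear_combination -quadraticChar_sq_one (neg_ne_zero.mpr (one_ne_zero (α := F)))

theorem four_mul_ite_quadraticChar_ne_one {a b : F} (hab : a ≠ b) (t : F) :
    4 * (if χ (t + a) ≠ 1 ∧ χ (t + b) ≠ 1 then 1 else 0 : ℤ) =
      (1 - χ (t + a)) * (1 - χ (t + b)) + ((if t = -a then 1 - χ (b - a) else 0) +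
        (if t = -b then 1 - χ (a - b) else 0)) := by
  by_cases ha : t = -a
  · subst ha
    have : -a ≠ -b := by simpa using hab
    rcases quadraticChar_dichotomy (sub_ne_zero.mpr hab.symm) with h | h <;>
      simp [this, h, neg_add_eq_sub]
  by_cases hb : t = -b
  · subst hb
    rcases quadraticChar_dichotomy (sub_ne_zero.mpr hab) with h | h <;>
      simp [ha, h, neg_add_eq_sub]
  have ha' : t + a ≠ 0 := fun h => ha (eq_neg_of_add_eq_zero_left h)
  have hb' : t + b ≠ 0 := fun h => hb (eq_neg_of_add_eq_zero_left h)
  rcases quadraticChar_dichotomy ha' with h | h <;>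
    rcases quadraticChar_dichotomy hb' with h' | h' <;> simp [ha, hb, h, h']

theorem four_mul_card_quadraticChar_ne_one (hF : ringChar F ≠ 2) {a b : F} (hab : a ≠ b) :
    4 * (#{t | χ (t + a) ≠ 1 ∧ χ (t + b) ≠ 1} : ℤ) =
      Fintype.card F + 1 - χ (b - a) - χ (a - b) := by
  rw [card_filter, Nat.cast_sum, mul_sum]
  simp only [Nat.cast_ite, Nat.cast_one, Nat.cast_zero, four_mul_ite_quadraticChar_ne_one hab,
    sum_add_distrib, sum_ite_eq', mem_univ, if_true]
  have expand : ∑ t, (1 - χ (t + a)) * (1 - χ (t + b)) =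
      Fintype.card F - ∑ t, χ (t + a) - ∑ t, χ (t + b) + ∑ t, χ (t + a) * χ (t + b) := by
    simp only [sub_mul, mul_sub, one_mul, mul_one, sum_sub_distrib, sum_const, card_univ,
      nsmul_eq_mul]
    ring
  have shift : ∀ c : F, ∑ t, χ (t + c) = 0 := fun c =>
    (Equiv.sum_comp (Equiv.addRight c) (fun t => χ t)).trans (quadraticChar_sum_zero hF)
  rw [expand, shift, shift, quadraticChar_sum_mul_add hF hab]
  ring

instance (t d : F) : Decidable (IsSquareTraceDet t d) := by
  unfold IsSquareTraceDet; infer_instance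

theorem isSquareTraceDet_iff_exists_quadraticChar {t d : F} :
    IsSquareTraceDet t d ↔ ∃ e, e * e = d ∧ χ (t + 2 * e) = 1 := by
  simp only [IsSquareTraceDet, quadraticChar_eq_one_iff_exists_mul_self, exists_and_left]

theorem card_not_isSquareTraceDet_of_quadraticChar_eq_neg_one {d : F} (hd : χ d = -1) :
    #{t | ¬IsSquareTraceDet t d} = Fintype.card F := by
  rw [filter_true_of_mem, card_univ]
  rintro t - ⟨e, s, he, -⟩
  exact quadraticChar_neg_one_iff_not_isSquare.mp hd ⟨e, he.symm⟩

theorem abs_four_mul_card_not_isSquareTraceDet_sub_le (hF : ringChar F ≠ 2) {y : F}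
    (hy : y ≠ 0) : |4 * (#{t | ¬IsSquareTraceDet t (y * y)} : ℤ) - q| ≤ 3 := by
  have hne : 2 * y ≠ 2 * -y := fun h =>
    hy ((Ring.eq_self_iff_eq_zero_of_char_ne_two hF).mp
      (mul_left_cancel₀ (Ring.two_ne_zero hF) h).symm)
  have hfilter : univ.filter (fun t => ¬IsSquareTraceDet t (y * y)) =
      univ.filter (fun t => χ (t + 2 * y) ≠ 1 ∧ χ (t + 2 * -y) ≠ 1) := by
    ext t
    simp [isSquareTraceDet_iff_exists_quadraticChar, mul_self_eq_mul_self_iff]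
  have hχ : ∀ x : F, -1 ≤ χ x ∧ χ x ≤ 1 := fun x => by
    rcases quadraticChar_isQuadratic F x with h | h | h <;> rw [h] <;> norm_num
  rw [hfilter, four_mul_card_quadraticChar_ne_one hF hne, abs_le]
  have h₁ := hχ (2 * -y - 2 * y)
  have h₂ := hχ (2 * y - 2 * -y)
  constructor <;> linarith [h₁.1, h₁.2, h₂.1, h₂.2]

theorem abs_eight_mul_card_not_isSquareTraceDet_sub_le (hF : ringChar F ≠ 2) {d : F}
    (hd : d ≠ 0) : |8 * (#{t | ¬IsSquareTraceDet t d} : ℤ) - q * (5 - 3 * χ d)| ≤ 6 := by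
  rcases quadraticChar_dichotomy hd with h | h
  · obtain ⟨y, rfl⟩ := (quadraticChar_one_iff_isSquare hd).mp h
    have hy : y ≠ 0 := by rintro rfl; simp at hd
    have := abs_four_mul_card_not_isSquareTraceDet_sub_le hF hy
    rw [h, abs_le] at *
    constructor <;> linarith [this.1, this.2]
  · rw [card_not_isSquareTraceDet_of_quadraticChar_eq_neg_one h, h]
    norm_num [mul_comm]

theorem abs_eight_mul_card_not_isSquareTraceDet_pairs_sub_le (hF : ringChar F ≠ 2) :
    |8 * (#{x : F × F | x.2 ≠ 0 ∧ ¬IsSquareTraceDet x.1 x.2} : ℤ) - 5 * q ^ 2| ≤ 11 * q := by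
  set c : F → ℤ := fun d => #{t | d ≠ 0 ∧ ¬IsSquareTraceDet t d}
  have hpairs : (#{x : F × F | x.2 ≠ 0 ∧ ¬IsSquareTraceDet x.1 x.2} : ℤ) = ∑ d, c d := by
    rw [card_filter, Fintype.sum_prod_type_right]
    simp only [c, card_filter, Nat.cast_sum]
  have hmain : ∑ d, q * (5 - 3 * χ d) = 5 * q ^ 2 := by
    rw [← mul_sum, sum_sub_distrib, ← mul_sum, quadraticChar_sum_zero hF, sum_const, card_univ,
      nsmul_eq_mul]
    ring
  have herr : ∀ d ∈ ({0}ᶜ : Finset F), |8 * c d - q * (5 - 3 * χ d)| ≤ 6 := fun d hd => by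
    have hd : d ≠ 0 := by simpa using hd
    simpa [c, hd] using abs_eight_mul_card_not_isSquareTraceDet_sub_le hF hd
  have hc0 : 8 * c 0 - q * (5 - 3 * χ 0) = -5 * q := by simp [c]; ring
  rw [hpairs, ← hmain, mul_sum, ← sum_sub_distrib, Fintype.sum_eq_add_sum_compl 0, hc0]
  have hsum : |∑ d ∈ ({0}ᶜ : Finset F), (8 * c d - q * (5 - 3 * χ d))| ≤ 6 * q :=
    calc _ ≤ ∑ d ∈ ({0}ᶜ : Finset F), |8 * c d - q * (5 - 3 * χ d)| := abs_sum_le_sum_abs _ _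
      _ ≤ ∑ d ∈ ({0}ᶜ : Finset F), (6 : ℤ) := sum_le_sum herr
      _ ≤ 6 * q := by
        rw [sum_const, nsmul_eq_mul, mul_comm]
        gcongr
        exact_mod_cast card_le_univ _
  have hq : 0 ≤ q := by positivity
  rw [abs_le] at hsum ⊢
  constructor <;> linarith [hsum.1, hsum.2]

theorem card_filter_trace_det (P : F → F → Prop) [DecidableRel P] :
    #{A : Matrix (Fin 2) (Fin 2) F | P A.trace A.det} =
      ∑ x ∈ {x : F × F | P x.1 x.2},
        #{A : Matrix (Fin 2) (Fin 2) F | A.trace = x.1 ∧ A.det = x.2} := by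
  rw [card_eq_sum_card_fiberwise (f := fun A => (A.trace, A.det))
    (t := univ.filter fun x : F × F => P x.1 x.2) fun A hA => by simpa using hA]
  refine sum_congr rfl fun x hx => ?_
  rw [mem_filter] at hx
  rw [filter_filter]
  congr 1
  refine filter_congr fun A _ => ⟨fun h => Prod.ext_iff.mp h.2, fun h => ⟨?_, Prod.ext h.1 h.2⟩⟩
  rw [h.1, h.2]
  exact hx.2

theorem abs_card_filter_trace_det_sub_le (P : F → F → Prop) [DecidableRel P] :
    |(#{A : Matrix (Fin 2) (Fin 2) F | P A.trace A.det} : ℤ) -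
      q ^ 2 * #{x : F × F | P x.1 x.2}| ≤ q ^ 3 := by
  have hconst : q ^ 2 * #{x : F × F | P x.1 x.2} = ∑ x ∈ {x : F × F | P x.1 x.2}, q ^ 2 := by
    rw [sum_const, nsmul_eq_mul, mul_comm]
  rw [card_filter_trace_det, Nat.cast_sum, hconst, ← sum_sub_distrib]
  calc _ ≤ ∑ x ∈ {x : F × F | P x.1 x.2},
        |(#{A : Matrix (Fin 2) (Fin 2) F | A.trace = x.1 ∧ A.det = x.2} : ℤ) - q ^ 2| :=
        abs_sum_le_sum_abs _ _
    _ ≤ ∑ x ∈ {x : F × F | P x.1 x.2}, q := sum_le_sum fun x _ => abs_card_trace_det_sub_le _ _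
    _ ≤ q ^ 3 := by
        rw [sum_const, nsmul_eq_mul, pow_succ]
        gcongr
        calc (#{x : F × F | P x.1 x.2} : ℤ) ≤ Fintype.card (F × F) := by
              exact_mod_cast card_le_univ _
          _ = q ^ 2 := by rw [Fintype.card_prod]; push_cast; ring

open scoped Classical in
theorem abs_card_nonsquare_sub_card_le :
    |(#{A : Matrix (Fin 2) (Fin 2) F | IsUnit A ∧ ¬∃ B, IsUnit B ∧ B * B = A} : ℤ) -
      #{A : Matrix (Fin 2) (Fin 2) F | A.det ≠ 0 ∧ ¬IsSquareTraceDet A.trace A.det}| ≤ q := by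
  refine (abs_card_sub_card_le (u := univ.image fun c : F => c • 1) fun A hA => ?_).trans ?_
  · have hA_scalar : ∀ c : F, A ≠ c • 1 := fun c h => hA (mem_image.mpr ⟨c, mem_univ _, h.symm⟩)
    simp only [mem_filter, mem_univ, true_and, ← isUnit_iff_ne_zero, ← isUnit_iff_isUnit_det]
    exact and_congr_right fun hu => not_congr (isSquare_iff_isSquareTraceDet hu hA_scalar)
  · exact_mod_cast card_image_le

theorem abs_eight_mul_ncard_nonsquare_sub_le (hF : ringChar F ≠ 2) :
    |8 * ({A : Matrix (Fin 2) (Fin 2) F | IsUnit A ∧ ¬∃ B, IsUnit B ∧ B * B = A}.ncard : ℤ) -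
      5 * q ^ 4| ≤ 27 * q ^ 3 := by
  classical
  have h₁ := abs_card_nonsquare_sub_card_le (F := F)
  have h₂ := abs_card_filter_trace_det_sub_le fun t d : F => d ≠ 0 ∧ ¬IsSquareTraceDet t d
  have h₃ := abs_eight_mul_card_not_isSquareTraceDet_pairs_sub_le hF
  have hq : 1 ≤ q := by exact_mod_cast Fintype.card_pos
  rw [Set.ncard_eq_toFinset_card', Set.toFinset_ofPred]
  rw [abs_le] at *
  constructor <;> nlinarith

end FiniteField

theorem stmt_8 :
    ∃ C : ℝ, ∀ p : ℕ, p.Prime → Odd p →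
      |(({A : Matrix (Fin 2) (Fin 2) (ZMod p) | IsUnit A ∧
            ¬ ∃ B : Matrix (Fin 2) (Fin 2) (ZMod p), IsUnit B ∧ B * B = A}.ncard : ℝ)
          - (5 / 8) * (p : ℝ) ^ 4)| ≤ C * (p : ℝ) ^ 3 := by
  refine ⟨27 / 8, fun p hp hodd => ?_⟩
  have := Fact.mk hp
  have hF : ringChar (ZMod p) ≠ 2 := by
    rw [ZMod.ringChar_zmod_n]
    rintro rfl
    exact absurd hodd (by decide)
  have h := abs_eight_mul_ncard_nonsquare_sub_le hF
  rw [ZMod.card] at h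
  have h' : |8 * ({A : Matrix (Fin 2) (Fin 2) (ZMod p) | IsUnit A ∧
      ¬ ∃ B, IsUnit B ∧ B * B = A}.ncard : ℝ) - 5 * (p : ℝ) ^ 4| ≤ 27 * (p : ℝ) ^ 3 := by
    exact_mod_cast h
  rw [abs_le] at h' ⊢
  constructor <;> linarith [h'.1, h'.2]
end

section
/- Let A, B, C be positive integers with ABC < p for a prime p. Then the number of 6-tuples (a₁, a₂, b₁, b₂, c₁, c₂) with 1 ≤ aᵢ ≤ A, 1 ≤ bᵢ ≤ B, 1 ≤ cᵢ ≤ C and a₁b₁c₂ = a₂b₂c₁ is at most Σ_{1 ≤ m ≤ ABC} τ₃(m)², and hence is O(ABC · (log p)⁸). -/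
/-!
Grouping the tuples by `m = a₁ b₁ c₂ = a₂ b₂ c₁ ≤ ABC`, both `(a₁, b₁, c₂)` and `(a₂, b₂, c₁)` are
ordered factorizations of `m` into three factors, so there are at most `∑ τ₃(m)²` tuples.
Two factorizations of `m` into `k` and `l` factors are the row and column products of a
`k × l` matrix of factors, obtained by repeatedly splitting a factor along the other
factorization; hence `τ₃(m)² ≤ τ₉(m)`. Summing, `∑_{m ≤ N} τ_{k+1}(m)` counts `(k+1)`-tuples with
product `≤ N`; for fixed last `k` entries `g` there are `N / ∏ g` choices of the first, so the
sum is at most `N (∑_{d ≤ N} 1/d)^k ≤ N (1 + log N)^k`. Finally `log N ≤ log p` and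
`1 ≤ log p / log 2`.
-/

/-- `τ₃ m`: the triple divisor function. -/
noncomputable def tau3 (m : ℕ) : ℕ :=
  {k : Fin 3 → ℕ | ∏ i, k i = m}.ncard

open Finset Nat

theorem Nat.exists_mul_eq_of_mul_eq_prod {κ : Type*} [DecidableEq κ] (t : Finset κ)
    (l : κ → ℕ) {a b : ℕ} (h : a * b = ∏ j ∈ t, l j) (h0 : a * b ≠ 0) :
    ∃ x y : κ → ℕ, (∀ j ∈ t, x j * y j = l j) ∧ ∏ j ∈ t, x j = a ∧ ∏ j ∈ t, y j = b := by
  induction t using Finset.induction_on generalizing a b with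
  | empty =>
    obtain ⟨rfl, rfl⟩ : a = 1 ∧ b = 1 := by simpa using h
    exact ⟨1, 1, by simp, by simp, by simp⟩
  | insert j₀ t hj₀ ih =>
    rw [prod_insert hj₀] at h
    obtain ⟨w, u, ⟨v, hv⟩, ⟨z, hz⟩, rfl⟩ := exists_dvd_and_dvd_of_dvd_mul (Dvd.intro b h)
    have hb : b = v * z := mul_left_cancel₀ (left_ne_zero_of_mul h0) <| by
      rw [h, hv, hz]; ring
    obtain ⟨x, y, hxy, hx, hy⟩ :=
      ih hz.symm (hz ▸ right_ne_zero_of_mul (h ▸ h0 : l j₀ * ∏ j ∈ t, l j ≠ 0))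
    have hxt : ∀ j ∈ t, j ≠ j₀ := fun j hj hj' => hj₀ (hj' ▸ hj)
    refine ⟨Function.update x j₀ w, Function.update y j₀ v, ?_, ?_, ?_⟩
    · intro j hj
      rcases mem_insert.mp hj with rfl | hj
      · simp [hv]
      · simp [Function.update_of_ne (hxt j hj), hxy j hj]
    · rw [prod_insert hj₀, prod_update_of_notMem hj₀, Function.update_self, hx]
    · rw [prod_insert hj₀, prod_update_of_notMem hj₀, Function.update_self, hy, hb]

theorem Nat.exists_matrix_of_prod_eq_prod {ι κ : Type*} [DecidableEq ι] [DecidableEq κ]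
    (s : Finset ι) (t : Finset κ) (k : ι → ℕ) (l : κ → ℕ)
    (h : ∏ i ∈ s, k i = ∏ j ∈ t, l j) (h0 : ∏ j ∈ t, l j ≠ 0) :
    ∃ d : ι → κ → ℕ, (∀ i ∈ s, ∏ j ∈ t, d i j = k i) ∧ ∀ j ∈ t, ∏ i ∈ s, d i j = l j := by
  induction s using Finset.induction_on generalizing l with
  | empty =>
    refine ⟨1, by simp, fun j hj => ?_⟩
    have : l j ∣ 1 := by rw [← prod_empty (f := k), h]; exact dvd_prod_of_mem l hj
    simpa using (Nat.dvd_one.mp this).symm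
  | insert a s ha ih =>
    rw [prod_insert ha] at h
    obtain ⟨x, y, hxy, hx, hy⟩ := Nat.exists_mul_eq_of_mul_eq_prod t l h (h ▸ h0)
    obtain ⟨d, hrow, hcol⟩ := ih y hy.symm (hy ▸ right_ne_zero_of_mul (h ▸ h0))
    have hsa : ∀ i ∈ s, i ≠ a := fun i hi hi' => ha (hi' ▸ hi)
    refine ⟨Function.update d a x, fun i hi => ?_, fun j hj => ?_⟩
    · rcases mem_insert.mp hi with rfl | hi
      · simpa using hx
      · simpa [Function.update_of_ne (hsa i hi)] using hrow i hi
    · rw [prod_insert ha, Function.update_self, ← hxy j hj, ← hcol j hj]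
      congr 1
      exact prod_congr rfl fun i hi => by rw [Function.update_of_ne (hsa i hi)]

theorem Nat.card_finMulAntidiag_mul_card_le (k l n : ℕ) :
    #(finMulAntidiag k n) * #(finMulAntidiag l n) ≤ #(finMulAntidiag (k * l) n) := by
  rw [← card_product]
  refine card_le_card_of_surjOn (fun g => (fun i => ∏ j, g (finProdFinEquiv (i, j)),
    fun j => ∏ i, g (finProdFinEquiv (i, j)))) ?_
  rintro ⟨u, v⟩ huv
  simp only [coe_product, Set.mem_prod, mem_coe, mem_finMulAntidiag] at huv
  obtain ⟨⟨hu, hn⟩, hv, -⟩ := huv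
  obtain ⟨d, hrow, hcol⟩ :=
    Nat.exists_matrix_of_prod_eq_prod univ univ u v (hu.trans hv.symm) (hv ▸ hn)
  refine ⟨fun x => d (finProdFinEquiv.symm x).1 (finProdFinEquiv.symm x).2, ?_, ?_⟩
  · rw [mem_coe, mem_finMulAntidiag, ← Equiv.prod_comp finProdFinEquiv, Fintype.prod_prod_type]
    simp [hrow, hu, hn]
  · simp [hrow, hcol]

theorem tau3_eq_card_finMulAntidiag {m : ℕ} (hm : m ≠ 0) : tau3 m = #(finMulAntidiag 3 m) := by
  rw [tau3, ← Set.ncard_coe_finset]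
  congr
  ext f
  simp [hm]

theorem Nat.sum_card_finMulAntidiag_le (k N : ℕ) :
    (∑ m ∈ Icc 1 N, #(finMulAntidiag (k + 1) m) : ℝ) ≤ N * (1 + Real.log N) ^ k := by
  set U := (Icc 1 N).biUnion (finMulAntidiag (k + 1))
  have hU : ∑ m ∈ Icc 1 N, #(finMulAntidiag (k + 1) m) = #U := by
    refine (card_biUnion fun m _ m' _ hne => disjoint_left.mpr fun f hf hf' => hne ?_).symm
    rw [← prod_eq_of_mem_finMulAntidiag hf, prod_eq_of_mem_finMulAntidiag hf']
  have hmem : ∀ f ∈ U, ∏ i, f i ≠ 0 ∧ ∏ i, f i ≤ N := by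
    intro f hf
    obtain ⟨m, hm, hf⟩ := mem_biUnion.mp hf
    rw [prod_eq_of_mem_finMulAntidiag hf]
    exact ⟨(mem_finMulAntidiag.mp hf).2, (mem_Icc.mp hm).2⟩
  have htail : ∀ f ∈ U, Fin.tail f ∈ Fintype.piFinset fun _ : Fin k => Icc 1 N := by
    intro f hf
    obtain ⟨hne, hle⟩ := hmem f hf
    refine Fintype.mem_piFinset.mpr fun i => mem_Icc.mpr ⟨Nat.one_le_iff_ne_zero.mpr ?_, ?_⟩
    · exact fun h0 => hne (prod_eq_zero (mem_univ i.succ) h0)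
    · exact (Nat.le_of_dvd (pos_of_ne_zero hne) (dvd_prod_of_mem f (mem_univ _))).trans hle
  -- a tuple with product at most `N` is determined by its tail `g` and its head `≤ N / ∏ g`
  have hfiber : ∀ g : Fin k → ℕ, #{f ∈ U | Fin.tail f = g} ≤ N / ∏ i, g i := by
    intro g
    refine (card_le_card_of_injOn (t := Icc 1 (N / ∏ i, g i)) (fun f => f 0) (fun f hf => ?_)
      (fun f hf f' hf' h => ?_)).trans_eq (by simp)
    · obtain ⟨hfU, rfl⟩ := mem_filter.mp hf
      obtain ⟨hne, hle⟩ := hmem f hfU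
      rw [Fin.prod_univ_succ] at hne hle
      exact mem_Icc.mpr ⟨pos_of_ne_zero (left_ne_zero_of_mul hne),
        (Nat.le_div_iff_mul_le (pos_of_ne_zero (right_ne_zero_of_mul hne))).mpr hle⟩
    · rw [← Fin.cons_self_tail f, ← Fin.cons_self_tail f', (mem_filter.mp hf).2,
        (mem_filter.mp hf').2]
      simp only at h
      rw [h]
  have hcount : #U ≤ ∑ g ∈ Fintype.piFinset (fun _ : Fin k => Icc 1 N), N / ∏ i, g i := by
    rw [card_eq_sum_card_fiberwise htail]
    exact sum_le_sum fun g _ => hfiber g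
  calc (∑ m ∈ Icc 1 N, #(finMulAntidiag (k + 1) m) : ℝ)
      ≤ ∑ g ∈ Fintype.piFinset (fun _ : Fin k => Icc 1 N), ((N / ∏ i, g i : ℕ) : ℝ) := by
        exact_mod_cast hU ▸ hcount
    _ ≤ ∑ g ∈ Fintype.piFinset (fun _ : Fin k => Icc 1 N), N * ∏ i, ((g i : ℕ) : ℝ)⁻¹ :=
        sum_le_sum fun g _ => Nat.cast_div_le.trans_eq (by push_cast; rw [prod_inv_distrib]; ring)
    _ = N * ∏ _i : Fin k, ∑ d ∈ Icc 1 N, (d : ℝ)⁻¹ := by rw [prod_univ_sum, mul_sum]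
    _ = N * (∑ d ∈ Icc 1 N, (d : ℝ)⁻¹) ^ k := by rw [prod_const, Finset.card_fin]
    _ ≤ N * (1 + Real.log N) ^ k := by
        gcongr
        simpa [harmonic_eq_sum_Icc] using harmonic_le_one_add_log N

theorem sum_tau3_sq_le (N : ℕ) :
    ((∑ m ∈ Icc 1 N, tau3 m ^ 2 : ℕ) : ℝ) ≤ N * (1 + Real.log N) ^ 8 := by
  have h : ∑ m ∈ Icc 1 N, tau3 m ^ 2 ≤ ∑ m ∈ Icc 1 N, #(finMulAntidiag 9 m) := by
    refine sum_le_sum fun m hm => ?_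
    rw [tau3_eq_card_finMulAntidiag (by have := (mem_Icc.mp hm).1; omega), sq]
    exact card_finMulAntidiag_mul_card_le 3 3 m
  exact (Nat.cast_le.mpr h).trans (by exact_mod_cast Nat.sum_card_finMulAntidiag_le 8 N)

theorem one_add_log_le_mul_log {N p : ℕ} (hp : 2 ≤ p) (hN : N ≤ p) :
    1 + Real.log N ≤ (1 + (Real.log 2)⁻¹) * Real.log p := by
  have hlog2 : 0 < Real.log 2 := Real.log_pos one_lt_two
  have hp' : Real.log 2 ≤ Real.log p := Real.log_le_log two_pos (by exact_mod_cast hp)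
  have h1 : 1 ≤ (Real.log 2)⁻¹ * Real.log p := by
    rwa [inv_mul_eq_div, one_le_div hlog2]
  have h2 : Real.log N ≤ Real.log p := by
    rcases N.eq_zero_or_pos with rfl | hN0
    · simpa using hlog2.trans_le hp' |>.le
    · exact Real.log_le_log (by exact_mod_cast hN0) (by exact_mod_cast hN)
  linarith

def mulEqTuples (A B C : ℕ) : Set (ℕ × ℕ × ℕ × ℕ × ℕ × ℕ) :=
  {t | t.1 ∈ Finset.Icc 1 A ∧ t.2.1 ∈ Finset.Icc 1 A ∧
    t.2.2.1 ∈ Finset.Icc 1 B ∧ t.2.2.2.1 ∈ Finset.Icc 1 B ∧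
    t.2.2.2.2.1 ∈ Finset.Icc 1 C ∧ t.2.2.2.2.2 ∈ Finset.Icc 1 C ∧
    t.1 * t.2.2.1 * t.2.2.2.2.2 = t.2.1 * t.2.2.2.1 * t.2.2.2.2.1}

theorem ncard_mulEqTuples_le (A B C : ℕ) :
    (mulEqTuples A B C).ncard ≤ ∑ m ∈ Icc 1 (A * B * C), tau3 m ^ 2 := by
  let merge : (Fin 3 → ℕ) × (Fin 3 → ℕ) → ℕ × ℕ × ℕ × ℕ × ℕ × ℕ :=
    fun fg => (fg.1 0, fg.2 0, fg.1 1, fg.2 1, fg.2 2, fg.1 2)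
  let pairs := (Icc 1 (A * B * C)).biUnion fun m => finMulAntidiag 3 m ×ˢ finMulAntidiag 3 m
  have hsub : mulEqTuples A B C ⊆ pairs.image merge := by
    rintro ⟨a₁, a₂, b₁, b₂, c₁, c₂⟩ ⟨ha₁, ha₂, hb₁, hb₂, hc₁, hc₂, heq⟩
    simp only [mem_Icc] at ha₁ ha₂ hb₁ hb₂ hc₁ hc₂
    have hm : a₁ * b₁ * c₂ ∈ Icc 1 (A * B * C) := mem_Icc.mpr
      ⟨by simpa using Nat.mul_le_mul (Nat.mul_le_mul ha₁.1 hb₁.1) hc₂.1, by gcongr <;> omega⟩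
    refine mem_image.mpr ⟨(![a₁, b₁, c₂], ![a₂, b₂, c₁]), mem_biUnion.mpr ⟨_, hm, ?_⟩, rfl⟩
    simp only [heq, mem_product, mem_finMulAntidiag, Fin.prod_univ_three, Matrix.cons_val_zero,
      Matrix.cons_val_one, Matrix.cons_val, ne_eq, _root_.mul_eq_zero, not_or, true_and, and_self]
    omega
  calc (mulEqTuples A B C).ncard
      ≤ #(pairs.image merge) := by
        rw [← Set.ncard_coe_finset]; exact Set.ncard_le_ncard hsub (finite_toSet _)
    _ ≤ #pairs := card_image_le
    _ ≤ ∑ m ∈ Icc 1 (A * B * C), #(finMulAntidiag 3 m ×ˢ finMulAntidiag 3 m) := card_biUnion_le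
    _ = ∑ m ∈ Icc 1 (A * B * C), tau3 m ^ 2 := sum_congr rfl fun m hm => by
        rw [card_product, ← sq, tau3_eq_card_finMulAntidiag (by have := (mem_Icc.mp hm).1; omega)]

theorem stmt_12 :
    ∃ C0 : ℝ, ∀ (p A B C : ℕ), p.Prime → 0 < A → 0 < B → 0 < C → A * B * C < p →
      ({t : ℕ × ℕ × ℕ × ℕ × ℕ × ℕ |
          t.1 ∈ Finset.Icc 1 A ∧ t.2.1 ∈ Finset.Icc 1 A ∧
          t.2.2.1 ∈ Finset.Icc 1 B ∧ t.2.2.2.1 ∈ Finset.Icc 1 B ∧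
          t.2.2.2.2.1 ∈ Finset.Icc 1 C ∧ t.2.2.2.2.2 ∈ Finset.Icc 1 C ∧
          t.1 * t.2.2.1 * t.2.2.2.2.2 = t.2.1 * t.2.2.2.1 * t.2.2.2.2.1}.ncard
        ≤ ∑ m ∈ Finset.Icc 1 (A * B * C), (tau3 m) ^ 2) ∧
      (({t : ℕ × ℕ × ℕ × ℕ × ℕ × ℕ |
          t.1 ∈ Finset.Icc 1 A ∧ t.2.1 ∈ Finset.Icc 1 A ∧
          t.2.2.1 ∈ Finset.Icc 1 B ∧ t.2.2.2.1 ∈ Finset.Icc 1 B ∧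
          t.2.2.2.2.1 ∈ Finset.Icc 1 C ∧ t.2.2.2.2.2 ∈ Finset.Icc 1 C ∧
          t.1 * t.2.2.1 * t.2.2.2.2.2 = t.2.1 * t.2.2.2.1 * t.2.2.2.2.1}.ncard : ℝ)
        ≤ C0 * (A * B * C : ℝ) * Real.log p ^ 8) := by
  refine ⟨(1 + (Real.log 2)⁻¹) ^ 8, fun p A B C hp _ _ _ hlt =>
    ⟨ncard_mulEqTuples_le A B C, ?_⟩⟩
  calc ((mulEqTuples A B C).ncard : ℝ)
      ≤ ((∑ m ∈ Icc 1 (A * B * C), tau3 m ^ 2 : ℕ) : ℝ) := by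
        exact_mod_cast ncard_mulEqTuples_le A B C
    _ ≤ (A * B * C : ℕ) * (1 + Real.log (A * B * C : ℕ)) ^ 8 := sum_tau3_sq_le _
    _ ≤ (A * B * C : ℕ) * ((1 + (Real.log 2)⁻¹) * Real.log p) ^ 8 := by
        have := Real.log_natCast_nonneg (A * B * C)
        gcongr
        exact one_add_log_le_mul_log hp.two_le hlt.le
    _ = (1 + (Real.log 2)⁻¹) ^ 8 * (A * B * C : ℝ) * Real.log p ^ 8 := by push_cast; ring
end
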